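/- For every n ≥ 0, letting L_2(n) = Σ_{k=0}^n 2(-q^{n+1})^k/(1+q^k) · H_k(q)/H_n(q), one has L_2(n+1) - L_2(n) = 2(-q)^{(n+1)^2} as rational functions in q. -/

import Mathlib

open Finset

/-- The formal variable q as a rational function. -/
noncomputable def q : RatFunc ℚ := RatFunc.X

/-- H n q = prod_{j=1}^n (1+q^j)/(1-q^j). -/
noncomputable def H (n : ℕ) : RatFunc ℚ := ∏ j ∈ Finset.Icc 1 n, (1 + q ^ j) / (1 - q ^ j)

/-- The left-hand side of identity (b). -/
noncomputable def L2 (n : ℕ) : RatFunc ℚ :=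
  ∑ k ∈ Finset.range (n + 1), 2 * (-q ^ (n + 1)) ^ k / (1 + q ^ k) * (H k / H n)

/-!
The summands `F n k` of `L2 n` and `G n k = F n k (1 - q^k) / (1 + q^(n+1))` form a WZ pair,
`F (n+1) k - F n k = G n (k+1) - G n k`, a consequence of the first-order recurrences of `F`
in `n` and in `k`. Summing over `k ≤ n` telescopes, `G n 0 = 0`, and the boundary terms
`F (n+1) (n+1) + G n (n+1)` collapse to `2 (-q^(n+1))^(n+1) = 2 (-q)^((n+1)^2)`.
-/

theorem neg_pow_pow_self {R : Type*} [Monoid R] [HasDistribNeg R] (a : R) (m : ℕ) :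
    (-a ^ m) ^ m = (-a) ^ (m ^ 2) := by
  rw [neg_pow, neg_pow a, ← pow_mul, sq]
  rcases Nat.even_or_odd m with hm | hm
  · rw [hm.neg_one_pow, (hm.mul_right m).neg_one_pow]
  · rw [hm.neg_one_pow, (hm.mul hm).neg_one_pow]

namespace RatFunc

variable {K : Type*} [Field K]

theorem one_add_X_pow_ne_zero {k : ℕ} (hk : 0 < k) : (1 : RatFunc K) + X ^ k ≠ 0 := by
  have h := algebraMap_ne_zero (Polynomial.X_pow_add_C_ne_zero hk (1 : K))
  rwa [map_add, map_pow, algebraMap_X, algebraMap_C, map_one, add_comm] at h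

theorem one_sub_X_pow_ne_zero {k : ℕ} (hk : 0 < k) : (1 : RatFunc K) - X ^ k ≠ 0 := by
  have h := algebraMap_ne_zero (Polynomial.X_pow_sub_C_ne_zero hk (1 : K))
  rw [map_sub, map_pow, algebraMap_X, algebraMap_C, map_one] at h
  exact sub_ne_zero.mpr (sub_ne_zero.mp h).symm

end RatFunc

theorem one_add_q_pow_ne_zero (k : ℕ) : 1 + q ^ k ≠ 0 := by
  rcases k.eq_zero_or_pos with rfl | hk
  · norm_num
  · exact RatFunc.one_add_X_pow_ne_zero hk

theorem one_sub_q_pow_ne_zero {k : ℕ} (hk : 0 < k) : 1 - q ^ k ≠ 0 :=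
  RatFunc.one_sub_X_pow_ne_zero hk

theorem H_ne_zero (n : ℕ) : H n ≠ 0 :=
  prod_ne_zero_iff.mpr fun j hj =>
    div_ne_zero (one_add_q_pow_ne_zero j) (one_sub_q_pow_ne_zero (mem_Icc.mp hj).1)

theorem H_succ (n : ℕ) : H (n + 1) = H n * ((1 + q ^ (n + 1)) / (1 - q ^ (n + 1))) :=
  (prod_Icc_succ_top (by omega) _).trans rfl

noncomputable def F (n k : ℕ) : RatFunc ℚ :=
  2 * (-q ^ (n + 1)) ^ k / (1 + q ^ k) * (H k / H n)

noncomputable def G (n k : ℕ) : RatFunc ℚ :=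
  F n k * (1 - q ^ k) / (1 + q ^ (n + 1))

theorem L2_eq_sum_F (n : ℕ) : L2 n = ∑ k ∈ range (n + 1), F n k := rfl

theorem F_self_mul (n : ℕ) : F n n * (1 + q ^ n) = 2 * (-q ^ (n + 1)) ^ n := by
  have := one_add_q_pow_ne_zero n
  rw [F, div_self (H_ne_zero n)]
  field_simp

theorem F_succ_left (n k : ℕ) :
    F (n + 1) k = F n k * (q ^ k * (1 - q ^ (n + 1)) / (1 + q ^ (n + 1))) := by
  have := one_add_q_pow_ne_zero (n + 1)
  have := one_sub_q_pow_ne_zero (Nat.succ_pos n)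
  have := H_ne_zero n
  rw [F, F, H_succ, pow_succ q (n + 1), neg_mul_eq_mul_neg, mul_pow]
  field_simp
  ring

theorem F_succ_right_mul (n k : ℕ) :
    F n (k + 1) * (1 - q ^ (k + 1)) = F n k * (-q ^ (n + 1) * (1 + q ^ k)) := by
  have := one_add_q_pow_ne_zero k
  have := one_add_q_pow_ne_zero (k + 1)
  have := one_sub_q_pow_ne_zero (Nat.succ_pos k)
  rw [F, F, H_succ, pow_succ (-q ^ (n + 1))]
  field_simp

theorem G_zero (n : ℕ) : G n 0 = 0 := by
  simp [G]

theorem F_succ_left_sub (n k : ℕ) : F (n + 1) k - F n k = G n (k + 1) - G n k := by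
  have := one_add_q_pow_ne_zero (n + 1)
  rw [G, G, F_succ_right_mul, F_succ_left]
  field_simp
  ring

theorem F_succ_self_add_G (n : ℕ) :
    F (n + 1) (n + 1) + G n (n + 1) = 2 * (-q ^ (n + 1)) ^ (n + 1) := by
  have := one_add_q_pow_ne_zero (n + 1)
  calc F (n + 1) (n + 1) + G n (n + 1) = F n (n + 1) * (1 - q ^ (n + 1)) := by
        rw [F_succ_left, G]
        field_simp
        ring
    _ = F n n * (1 + q ^ n) * -q ^ (n + 1) := by rw [F_succ_right_mul]; ring
    _ = 2 * (-q ^ (n + 1)) ^ (n + 1) := by rw [F_self_mul, pow_succ]; ring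

theorem L2_difference (n : ℕ) : L2 (n + 1) - L2 n = 2 * (-q) ^ ((n + 1) ^ 2) := by
  calc L2 (n + 1) - L2 n = F (n + 1) (n + 1) + ∑ k ∈ range (n + 1), (F (n + 1) k - F n k) := by
        rw [L2_eq_sum_F, L2_eq_sum_F, sum_range_succ, sum_sub_distrib]
        ring
    _ = F (n + 1) (n + 1) + (G n (n + 1) - G n 0) := by
        rw [sum_congr rfl fun k _ => F_succ_left_sub n k, sum_range_sub]
    _ = 2 * (-q) ^ ((n + 1) ^ 2) := by
        rw [G_zero, sub_zero, F_succ_self_add_G, neg_pow_pow_self]
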